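/- Let K be a convex body in ℝ^n and let γ = (q_1, …, q_m) be a closed polygon with q_{i+1} ≠ q_i for all i and with u_{i−1} ≠ u_i for all i, where u_i := (q_{i+1} − q_i)/‖q_{i+1} − q_i‖. Suppose γ ∈ 𝒫⁺(K) and len(γ) ≤ len(γ') for every closed polygon γ' ∈ 𝒫⁺(K). Then there exists x ∈ ℝ^n such that the translated polygon (q_i + x)_{i=1}^m is a periodic billiard trajectory on K. -/

import Mathlib

open scoped RealInnerProductSpace Pointwise
open Metric

noncomputable section

/-- Euclidean space ℝ^n. -/
abbrev Euc (n : ℕ) := EuclideanSpace ℝ (Fin n)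

/-- The image of a closed polygon with vertices `q 0, …, q (m-1)` (indices mod `m`):
the union of the segments `[q i, q (i+1)]`. -/
def polyImage {n m : ℕ} [NeZero m] (q : Fin m → Euc n) : Set (Euc n) :=
  ⋃ i : Fin m, segment ℝ (q i) (q (i + 1))

/-- The length of a closed polygon: `∑ i, ‖q (i+1) - q i‖`. -/
noncomputable def polyLength {n m : ℕ} [NeZero m] (q : Fin m → Euc n) : ℝ :=
  ∑ i : Fin m, ‖q (i + 1) - q i‖

/-- A convex body: a compact convex set with nonempty interior. -/
def IsConvexBody {n : ℕ} (K : Set (Euc n)) : Prop :=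
  IsCompact K ∧ Convex ℝ K ∧ (interior K).Nonempty

/-- A closed polygon belongs to `𝒫⁺(K)` if no translate of its image is contained
in the interior of `K`. -/
def InPPlus {n m : ℕ} [NeZero m] (K : Set (Euc n)) (q : Fin m → Euc n) : Prop :=
  ∀ x : Euc n, ¬ ((fun p => p + x) '' polyImage q ⊆ interior K)

/-- Unit direction of the `i`-th edge of a closed polygon. -/
noncomputable def dir {n m : ℕ} [NeZero m] (q : Fin m → Euc n) (i : Fin m) : Euc n :=
  ‖q (i + 1) - q i‖⁻¹ • (q (i + 1) - q i)

/-- Outer normal `ν i = u (i-1) - u i` at the `i`-th vertex. -/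
noncomputable def normalVec {n m : ℕ} [NeZero m] (q : Fin m → Euc n) (i : Fin m) : Euc n :=
  dir q (i - 1) - dir q i

/-- A periodic billiard trajectory on a convex body `K`. -/
def IsBilliard {n m : ℕ} [NeZero m] (K : Set (Euc n)) (q : Fin m → Euc n) : Prop :=
  2 ≤ m ∧ (∀ i, q (i + 1) ≠ q i) ∧ (∀ i, q i ∈ K) ∧
    ∀ i, normalVec q i ≠ 0 ∧ ∀ x ∈ K, ⟪x - q i, normalVec q i⟫ ≤ 0


/-!
Shrinking `γ` by a factor `c < 1` shortens it, so by minimality `c • γ ∉ 𝒫⁺(K)`: some translate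
of `c • γ` has its vertices in `int K`. Letting `c → 1` and using compactness, some translate
`γ + x` has all its vertices in `K`.

Let `p i ∈ K` maximise `⟪·, ν i⟫` on `K`. The polygons `q + t • (q - p)`, `t > 0`, stay in `𝒫⁺(K)`
(a translate of it inside `int K` would give one of `γ`, by a homothety centred at the `p i`), so
minimality forces the first variation of the length in the direction `q - p`, which is
`∑ ⟪q i - p i, ν i⟫`, to be nonnegative. Summation by parts gives `∑ ⟪q i + x, ν i⟫ = len γ`,
hence `∑ ⟪p i, ν i⟫ ≤ ∑ ⟪q i + x, ν i⟫`. Together with the termwise reverse inequality, every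
`q i + x` maximises `⟪·, ν i⟫` on `K`, i.e. `ν i` is an outer normal to `K` at `q i + x`.
-/

section General

variable {E : Type*}

lemma norm_add_le_norm_add_inner_add_sq_div [NormedAddCommGroup E] [InnerProductSpace ℝ E]
    {a : E} (ha : a ≠ 0) (c : E) :
    ‖a + c‖ ≤ ‖a‖ + ⟪‖a‖⁻¹ • a, c⟫ + ‖c‖ ^ 2 / (2 * ‖a‖) := by
  have hpos : 0 < ‖a‖ := norm_pos_iff.2 ha
  have hsq : ‖a + c‖ ^ 2 = ‖a‖ ^ 2 + 2 * ⟪a, c⟫ + ‖c‖ ^ 2 := norm_add_sq_real a c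
  have hrhs : ‖a‖ + ⟪‖a‖⁻¹ • a, c⟫ + ‖c‖ ^ 2 / (2 * ‖a‖)
      = (‖a‖ ^ 2 + ‖a + c‖ ^ 2) / (2 * ‖a‖) := by
    rw [real_inner_smul_left, hsq]
    field_simp
    ring
  rw [hrhs, le_div_iff₀ (by positivity)]
  nlinarith [two_mul_le_add_sq ‖a‖ ‖a + c‖]

lemma exists_forall_add_mem_of_forall_smul_add_mem [TopologicalSpace E] [AddCommGroup E]
    [Module ℝ E] [ContinuousSMul ℝ E] [IsTopologicalAddGroup E] [T2Space E] {ι : Type*}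
    {K : Set E} (hK : IsCompact K) (q : ι → E)
    (h : ∀ c ∈ Set.Ico (0 : ℝ) 1, ∃ x, ∀ i, c • q i + x ∈ K) :
    ∃ x, ∀ i, q i + x ∈ K := by
  rcases isEmpty_or_nonempty ι with _ | ⟨⟨i₀⟩⟩
  · exact ⟨0, isEmptyElim⟩
  -- `(c, y) ∈ B` iff the translate of `c • q` moving `q i₀` to `y` lies in `K`.
  set B : Set (ℝ × E) := (Set.Icc 0 1 ×ˢ K) ∩ ⋂ i, (fun p => p.1 • q i + (p.2 - p.1 • q i₀)) ⁻¹' K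
  have hB : IsCompact B := (isCompact_Icc.prod hK).inter_right
    (isClosed_iInter fun i => hK.isClosed.preimage (by fun_prop))
  have hIco : Set.Ico (0 : ℝ) 1 ⊆ Prod.fst '' B := by
    rintro c hc
    obtain ⟨x, hx⟩ := h c hc
    refine ⟨(c, c • q i₀ + x), ⟨⟨⟨hc.1, hc.2.le⟩, hx i₀⟩, Set.mem_iInter.2 fun i => ?_⟩, rfl⟩
    simpa using hx i
  have h1 : (1 : ℝ) ∈ Prod.fst '' B := by
    refine (hB.image continuous_fst).isClosed.closure_subset_iff.2 hIco ?_
    rw [closure_Ico zero_ne_one]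
    exact ⟨zero_le_one, le_rfl⟩
  obtain ⟨⟨c, y⟩, hyB, rfl⟩ := h1
  exact ⟨y - q i₀, fun i => by simpa using Set.mem_iInter.1 hyB.2 i⟩

end General

section Polygon

variable {n m : ℕ} [NeZero m]

lemma two_le_of_forall_apply_sub_one_ne {α : Type*} {f : Fin m → α}
    (h : ∀ i, f (i - 1) ≠ f i) : 2 ≤ m := by
  rcases m with _ | _ | m
  · exact absurd rfl (NeZero.ne 0)
  · exact absurd rfl (h 0)
  · omega

lemma image_add_polyImage_subset_iff {s : Set (Euc n)} (hs : Convex ℝ s) (q : Fin m → Euc n)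
    (x : Euc n) : (fun p => p + x) '' polyImage q ⊆ s ↔ ∀ i, q i + x ∈ s := by
  refine ⟨fun h i => h ⟨q i, Set.mem_iUnion.2 ⟨i, left_mem_segment ℝ _ _⟩, rfl⟩, fun h => ?_⟩
  rw [Set.image_subset_iff]
  exact Set.iUnion_subset fun i => (hs.translate_preimage_left x).segment_subset (h i) (h (i + 1))

lemma inPPlus_iff {K : Set (Euc n)} (hK : Convex ℝ K) (q : Fin m → Euc n) :
    InPPlus K q ↔ ∀ x, ∃ i, q i + x ∉ interior K := by
  simp only [InPPlus, image_add_polyImage_subset_iff hK.interior, not_forall]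

lemma InPPlus.add_smul_sub {K : Set (Euc n)} (hK : Convex ℝ K) {q p : Fin m → Euc n}
    (hq : InPPlus K q) (hp : ∀ i, p i ∈ K) {t : ℝ} (ht : 0 ≤ t) :
    InPPlus K (fun i => q i + t • (q i - p i)) := by
  rw [inPPlus_iff hK] at hq ⊢
  intro x
  obtain ⟨i, hi⟩ := hq ((1 + t)⁻¹ • x)
  refine ⟨i, fun hint => hi ?_⟩
  -- `q i + (1 + t)⁻¹ • x` lies on the segment from the deformed vertex to `p i ∈ K`.
  have hcombo : (1 + t)⁻¹ • (q i + t • (q i - p i) + x) + (t / (1 + t)) • p i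
      = q i + (1 + t)⁻¹ • x := by
    have : 1 + t ≠ 0 := by positivity
    match_scalars <;> field_simp
    ring
  rw [← hcombo]
  exact hK.combo_interior_self_mem_interior hint (hp i) (by positivity) (by positivity)
    (by field_simp)

lemma polyLength_pos {q : Fin m → Euc n} (hne : ∀ i, q (i + 1) ≠ q i) : 0 < polyLength q :=
  Finset.sum_pos (fun i _ => norm_pos_iff.2 (sub_ne_zero.2 (hne i))) Finset.univ_nonempty

lemma polyLength_smul (q : Fin m → Euc n) {c : ℝ} (hc : 0 ≤ c) :
    polyLength (fun i => c • q i) = c * polyLength q := by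
  simp only [polyLength, Finset.mul_sum, ← smul_sub, norm_smul, Real.norm_of_nonneg hc]

lemma polyLength_add_const (q : Fin m → Euc n) (x : Euc n) :
    polyLength (fun i => q i + x) = polyLength q := by
  simp only [polyLength, add_sub_add_right_eq_sub]

lemma normalVec_add_const (q : Fin m → Euc n) (x : Euc n) :
    normalVec (fun i => q i + x) = normalVec q := by
  funext i
  simp only [normalVec, dir, add_sub_add_right_eq_sub]

lemma inner_dir_sub (q : Fin m → Euc n) (i : Fin m) :
    ⟪dir q i, q (i + 1) - q i⟫ = ‖q (i + 1) - q i‖ := by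
  rw [dir, real_inner_smul_left, real_inner_self_eq_norm_sq, pow_two, ← mul_assoc]
  rcases eq_or_ne ‖q (i + 1) - q i‖ 0 with h | h
  · rw [h, mul_zero]
  · rw [inv_mul_cancel₀ h, one_mul]

lemma sum_inner_normalVec (q v : Fin m → Euc n) :
    ∑ i, ⟪v i, normalVec q i⟫ = ∑ i, ⟪dir q i, v (i + 1) - v i⟫ := by
  have hshift : ∑ i, ⟪v i, dir q (i - 1)⟫ = ∑ i, ⟪v (i + 1), dir q i⟫ :=
    Fintype.sum_equiv (Equiv.subRight 1) _ _ fun i => by simp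
  simp only [normalVec, inner_sub_right, Finset.sum_sub_distrib, hshift, real_inner_comm (v _)]

lemma sum_inner_normalVec_self (q : Fin m → Euc n) :
    ∑ i, ⟪q i, normalVec q i⟫ = polyLength q := by
  simp only [sum_inner_normalVec, inner_dir_sub, polyLength]

lemma sum_inner_add_normalVec (q : Fin m → Euc n) (x : Euc n) :
    ∑ i, ⟪q i + x, normalVec q i⟫ = polyLength q := by
  rw [← normalVec_add_const q x, sum_inner_normalVec_self, polyLength_add_const]

end Polygon

section Variation

variable {n m : ℕ} [NeZero m] {q : Fin m → Euc n}

lemma polyLength_add_smul_le (hne : ∀ i, q (i + 1) ≠ q i) (v : Fin m → Euc n) :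
    ∃ C, 0 ≤ C ∧ ∀ t : ℝ, polyLength (fun i => q i + t • v i)
      ≤ polyLength q + t * ∑ i, ⟪v i, normalVec q i⟫ + t ^ 2 * C := by
  refine ⟨∑ i, ‖v (i + 1) - v i‖ ^ 2 / (2 * ‖q (i + 1) - q i‖),
    Finset.sum_nonneg fun i _ => by positivity, fun t => ?_⟩
  rw [sum_inner_normalVec, polyLength, polyLength, Finset.mul_sum, Finset.mul_sum,
    ← Finset.sum_add_distrib, ← Finset.sum_add_distrib]
  refine Finset.sum_le_sum fun i _ => ?_
  have hedge : q (i + 1) + t • v (i + 1) - (q i + t • v i)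
      = (q (i + 1) - q i) + t • (v (i + 1) - v i) := by module
  calc ‖q (i + 1) + t • v (i + 1) - (q i + t • v i)‖
      = ‖(q (i + 1) - q i) + t • (v (i + 1) - v i)‖ := by rw [hedge]
    _ ≤ ‖q (i + 1) - q i‖ + ⟪dir q i, t • (v (i + 1) - v i)⟫
        + ‖t • (v (i + 1) - v i)‖ ^ 2 / (2 * ‖q (i + 1) - q i‖) :=
      norm_add_le_norm_add_inner_add_sq_div (sub_ne_zero.2 (hne i)) _
    _ = ‖q (i + 1) - q i‖ + t * ⟪dir q i, v (i + 1) - v i⟫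
        + t ^ 2 * (‖v (i + 1) - v i‖ ^ 2 / (2 * ‖q (i + 1) - q i‖)) := by
      rw [real_inner_smul_right, norm_smul, mul_pow, Real.norm_eq_abs, sq_abs]
      ring

lemma sum_inner_normalVec_nonneg_of_forall_polyLength_le (hne : ∀ i, q (i + 1) ≠ q i)
    {v : Fin m → Euc n}
    (h : ∀ t : ℝ, 0 < t → polyLength q ≤ polyLength (fun i => q i + t • v i)) :
    0 ≤ ∑ i, ⟪v i, normalVec q i⟫ := by
  obtain ⟨C, hC, hle⟩ := polyLength_add_smul_le hne v
  set D := ∑ i, ⟪v i, normalVec q i⟫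
  refine le_of_forall_pos_le_add fun ε hε => ?_
  set t := ε / (C + 1)
  have ht : 0 < t := by positivity
  have hDt : 0 ≤ D + t * C := by
    have := (h t ht).trans (hle t)
    nlinarith
  have htC : t * C ≤ ε := by
    rw [div_mul_eq_mul_div, div_le_iff₀ (by positivity)]
    nlinarith
  linarith

lemma exists_forall_add_mem_of_minimal {K : Set (Euc n)} (hK : IsCompact K)
    (hconv : Convex ℝ K) (hL : 0 < polyLength q)
    (hmin : ∀ q' : Fin m → Euc n, InPPlus K q' → polyLength q ≤ polyLength q') :
    ∃ x, ∀ i, q i + x ∈ K := by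
  refine exists_forall_add_mem_of_forall_smul_add_mem hK q fun c hc => ?_
  have hshort : ¬ InPPlus K (fun i => c • q i) := fun hP => by
    have := hmin _ hP
    rw [polyLength_smul q hc.1] at this
    nlinarith [hc.2]
  simp only [inPPlus_iff hconv, not_forall, not_exists, not_not] at hshort
  obtain ⟨x, hx⟩ := hshort
  exact ⟨x, fun i => interior_subset (hx i)⟩

end Variation

theorem stmt6 {n m : ℕ} [NeZero m] (K : Set (Euc n)) (hK : IsConvexBody K)
    (q : Fin m → Euc n)
    (hne : ∀ i, q (i + 1) ≠ q i)
    (hu : ∀ i, dir q (i - 1) ≠ dir q i)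
    (hP : InPPlus K q)
    (hmin : ∀ (m' : ℕ) [NeZero m'] (q' : Fin m' → Euc n),
      InPPlus K q' → polyLength q ≤ polyLength q') :
    ∃ x : Euc n, IsBilliard K (fun i => q i + x) := by
  obtain ⟨hKc, hKconv, -⟩ := hK
  obtain ⟨x, hx⟩ :=
    exists_forall_add_mem_of_minimal hKc hKconv (polyLength_pos hne) fun q' => hmin m q'
  choose p hpK hpmax using fun i => hKc.exists_isMaxOn ⟨_, hx 0⟩
    (f := fun y => ⟪y, normalVec q i⟫) (by fun_prop)
  have hvar : 0 ≤ ∑ i, ⟪q i - p i, normalVec q i⟫ :=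
    sum_inner_normalVec_nonneg_of_forall_polyLength_le hne (v := fun i => q i - p i)
      fun t ht => hmin m _ (hP.add_smul_sub hKconv hpK ht.le)
  have hle : ∀ i ∈ Finset.univ, ⟪q i + x, normalVec q i⟫ ≤ ⟪p i, normalVec q i⟫ :=
    fun i _ => hpmax i (hx i)
  have hsum : ∑ i, ⟪q i + x, normalVec q i⟫ = ∑ i, ⟪p i, normalVec q i⟫ := by
    refine le_antisymm (Finset.sum_le_sum hle) ?_
    simp only [inner_sub_left, Finset.sum_sub_distrib, sum_inner_normalVec_self] at hvar
    rw [sum_inner_add_normalVec]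
    linarith
  have heq := (Finset.sum_eq_sum_iff_of_le hle).1 hsum
  refine ⟨x, two_le_of_forall_apply_sub_one_ne hu, by simpa using hne, hx, fun i => ?_⟩
  rw [normalVec_add_const]
  refine ⟨sub_ne_zero.2 (hu i), fun y hy => ?_⟩
  rw [inner_sub_left, heq i (Finset.mem_univ i), sub_nonpos]
  exact hpmax i hy
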